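/- arXiv:1804.03762 — 3 statements merged into one kernel-verified Lean document; each statement's English description precedes it below -/
import Mathlib

section
/- For a commutative ring R, PicS(R) equals the set of isomorphism classes [E] of finitely generated projective central R-R-bimodules E such that for every prime ideal 𝔭 of R, the localization E_𝔭 is either 0 or isomorphic to R_𝔭 as an R_𝔭-module. -/
/-!
For finitely presented `M`, `End_R(M)` commutes with localization, and so does the map
`R → End_R(M)`; since surjectivity localizes and can be checked at maximal ideals, the
question reduces to a local ring `A`. There `M` is free, and a basis with two distinct vectors
`b i`, `b j` gives the projection onto `A ∙ b i`, which is not a scalar, so the rank is at most one.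
-/

open Module

section LocalizedEnd

variable {R M : Type*} [CommRing R] [AddCommGroup M] [Module R M]

lemma IsLocalizedModule.map_algebraLinearMap_end [FinitePresentation R M] (S : Submonoid R) :
    IsLocalizedModule.map S (Algebra.linearMap R (Localization S))
        (LocalizedModule.map S (M := M) (N := M)) (Algebra.linearMap R (End R M)) =
      (Algebra.linearMap (Localization S)
        (End (Localization S) (LocalizedModule S M))).restrictScalars R := by
  apply IsLocalizedModule.linearMap_ext S (Algebra.linearMap R (Localization S))
    (LocalizedModule.map S (M := M) (N := M))
  refine LinearMap.ext_ring ?_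
  rw [LinearMap.comp_apply, IsLocalizedModule.map_apply]
  simp [End.one_eq_id]

lemma surjective_algebraMap_end_localization [FinitePresentation R M] (S : Submonoid R)
    (h : Function.Surjective (algebraMap R (End R M))) :
    Function.Surjective
      (algebraMap (Localization S) (End (Localization S) (LocalizedModule S M))) := by
  have := IsLocalizedModule.map_surjective S (Algebra.linearMap R (Localization S))
    (LocalizedModule.map S (M := M) (N := M)) (Algebra.linearMap R (End R M)) h
  rwa [IsLocalizedModule.map_algebraLinearMap_end] at this

lemma surjective_algebraMap_end_of_localization_maximal [FinitePresentation R M]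
    (h : ∀ (P : Ideal R) [P.IsMaximal], Function.Surjective (algebraMap (Localization P.primeCompl)
      (End (Localization P.primeCompl) (LocalizedModule P.primeCompl M)))) :
    Function.Surjective (algebraMap R (End R M)) :=
  surjective_of_isLocalized_maximal (fun P _ ↦ Localization P.primeCompl)
    (fun P _ ↦ Algebra.linearMap R _) _ (fun P _ ↦ LocalizedModule.map P.primeCompl)
    (Algebra.linearMap R (End R M)) fun P _ ↦ by
      rw [IsLocalizedModule.map_algebraLinearMap_end]
      exact h P

end LocalizedEnd

section FreeRankOne

variable {A N : Type*} [CommRing A] [AddCommGroup N] [Module A N]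

lemma surjective_algebraMap_end_self : Function.Surjective (algebraMap A (End A A)) :=
  fun f ↦ ⟨f 1, LinearMap.ext_ring (by simp)⟩

lemma LinearEquiv.surjective_algebraMap_end (e : N ≃ₗ[A] A) :
    Function.Surjective (algebraMap A (End A N)) := by
  have : algebraMap A (End A N) = e.symm.conjAlgEquiv A ∘ algebraMap A (End A A) :=
    funext fun r ↦ ((e.symm.conjAlgEquiv A).commutes r).symm
  rw [this]
  exact (e.symm.conjAlgEquiv A).surjective.comp surjective_algebraMap_end_self

lemma Module.Basis.subsingleton_index_of_surjective_algebraMap_end [Nontrivial A] {ι : Type*}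
    (b : Basis ι A N) (h : Function.Surjective (algebraMap A (End A N))) : Subsingleton ι := by
  refine ⟨fun i j ↦ by_contra fun hij ↦ ?_⟩
  obtain ⟨r, hr⟩ := h ((b.coord i).smulRight (b i))
  have hri : r • b i = b i := by simpa using LinearMap.congr_fun hr (b i)
  have hrj : r • b j = 0 := by simpa [Ne.symm hij] using LinearMap.congr_fun hr (b j)
  have hr1 : r = 1 := by simpa using congr_arg (b.repr · i) hri
  have hr0 : r = 0 := by simpa using congr_arg (b.repr · j) hrj
  exact one_ne_zero (hr1.symm.trans hr0)

lemma subsingleton_or_nonempty_linearEquiv_of_surjective_algebraMap_end [Nontrivial A] [Free A N]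
    (h : Function.Surjective (algebraMap A (End A N))) :
    Subsingleton N ∨ Nonempty (N ≃ₗ[A] A) := by
  rcases subsingleton_or_nontrivial N with hN | hN
  · exact .inl hN
  refine .inr ?_
  let b := Free.chooseBasis A N
  have := b.subsingleton_index_of_surjective_algebraMap_end h
  exact ⟨b.repr.trans (Finsupp.uniqueLinearEquiv A A b.index_nonempty.some)⟩

lemma surjective_algebraMap_end_iff_of_isLocalRing [IsLocalRing A] [Module.Finite A N]
    [Projective A N] :
    Function.Surjective (algebraMap A (End A N)) ↔ Subsingleton N ∨ Nonempty (N ≃ₗ[A] A) := by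
  have : FinitePresentation A N := finitePresentation_of_projective A N
  have : Free A N := free_of_flat_of_isLocalRing
  refine ⟨subsingleton_or_nonempty_linearEquiv_of_surjective_algebraMap_end, ?_⟩
  rintro (_ | ⟨⟨e⟩⟩)
  · exact fun f ↦ ⟨0, Subsingleton.elim _ _⟩
  · exact e.surjective_algebraMap_end

end FreeRankOne

/-- Characterization of `PicS(R)`: a finitely generated projective (central)
`R`-module `M` admits an `R`-algebra epimorphism `R → End_R(M)` (i.e. the class
`[M]` lies in `PicS(R)`) if and only if `M` has rank at most one at every prime,
i.e. for every prime `𝔭` of `R` the localization `M_𝔭` is `0` or isomorphic to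
`R_𝔭` as an `R_𝔭`-module. -/
theorem picS_char (R : Type) [CommRing R]
    (M : Type) [AddCommGroup M] [Module R M]
    (hfin : Module.Finite R M) (hproj : Module.Projective R M) :
    Function.Surjective (algebraMap R (Module.End R M)) ↔
      ∀ (p : Ideal R) [p.IsPrime],
        Subsingleton (LocalizedModule p.primeCompl M) ∨
          Nonempty (LocalizedModule p.primeCompl M ≃ₗ[Localization p.primeCompl]
            Localization p.primeCompl) := by
  have : FinitePresentation R M := finitePresentation_of_projective R M
  refine ⟨fun h p _ ↦ ?_, fun h ↦ surjective_algebraMap_end_of_localization_maximal fun P _ ↦ ?_⟩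
  · exact surjective_algebraMap_end_iff_of_isLocalRing.mp
      (surjective_algebraMap_end_localization p.primeCompl h)
  · exact surjective_algebraMap_end_iff_of_isLocalRing.mpr (h P)
end

section
/- Let R be a commutative ring and M a finitely generated projective R-module with annihilator I_M = Ann_R(M). The following are equivalent: (i) M ⊗_R M ≅ M as R-modules; (ii) M ≅ R/I_M as R-modules; (iii) M ≅ Re for some idempotent e ∈ R (and then I_M = R(1−e)). -/
/-!
`M ⊗ M ≅ M` forces the rank `r` of `M` at every prime to satisfy `r² = r`, so `M` is locally free
of rank at most one. Hence `m ⊗ n = n ⊗ m` in `M ⊗ M`, which turns every endomorphism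
`∑ fᵢ(·) mᵢ` into the scalar `∑ fᵢ(mᵢ)`, so `End M ≅ R/I_M`, and then
`M ≅ R/I_M ⊗ M ≅ End M ⊗ M ≅ Hom(M, M ⊗ M) ≅ End M ≅ R/I_M`. Conversely `R/I_M ⊗ M ≅ M/I_M M = M`.
If `R/I` is projective, `R → R/I` splits, and the image `e` of `1` under a splitting is an
idempotent with `I = R(1 - e)`; finally `R/R(1 - e) ≅ Re`.
-/

open TensorProduct Module

section
variable {R M : Type*} [CommRing R] [AddCommGroup M] [Module R M]

theorem rankAtStalk_le_one_of_tensor_self_equiv [Module.Finite R M] [Flat R M]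
    (φ : M ⊗[R] M ≃ₗ[R] M) (p : PrimeSpectrum R) : rankAtStalk M p ≤ 1 := by
  have h : rankAtStalk M p * rankAtStalk M p = rankAtStalk M p := by
    rw [← Pi.mul_apply, ← rankAtStalk_tensorProduct, rankAtStalk_eq_of_equiv φ]
  nlinarith

attribute [local instance] free_of_flat_of_isLocalRing in
theorem tensorProductComm_eq_refl_of_rankAtStalk_le_one [Module.Finite R M] [Flat R M]
    (h : ∀ p, rankAtStalk (R := R) M p ≤ 1) : TensorProduct.comm R M M = .refl .. := by
  let loc (P : Ideal R) [P.IsMaximal] :=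
    TensorProduct.map (LocalizedModule.mkLinearMap P.primeCompl M)
      (LocalizedModule.mkLinearMap P.primeCompl M)
  apply LinearEquiv.toLinearMap_injective
  refine LinearMap.eq_of_localization_maximal _ loc _ loc _ _ fun P _ ↦ ?_
  have hloc : IsLocalizedModule.map P.primeCompl (loc P) (loc P) (TensorProduct.comm R M M) =
      (TensorProduct.comm R _ _).toLinearMap := by
    apply IsLocalizedModule.linearMap_ext P.primeCompl (loc P) (loc P)
    ext
    exact IsLocalizedModule.map_apply _ (loc P) ..
  rw [hloc]
  obtain ⟨v, hv⟩ := finrank_le_one_iff.mp (h ⟨P, inferInstance⟩)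
  ext x y
  obtain ⟨a, rfl⟩ := hv x
  obtain ⟨b, rfl⟩ := hv y
  -- scalars of the localization pass through `⊗[R]` (`TensorProduct.CompatibleSMul`)
  simp

theorem dualTensorHom_eq_of_tensorProductComm_eq_refl (h : TensorProduct.comm R M M = .refl ..) :
    dualTensorHom R M M = Algebra.linearMap R (Module.End R M) ∘ₗ contractLeft R M := by
  ext f m x
  have hx : f x • m = f m • x := by
    simpa using congr(TensorProduct.lid R M (f.rTensor M $(LinearEquiv.congr_fun h (m ⊗ₜ x))))
  simpa [dualTensorHom_apply, contractLeft_apply] using hx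

theorem algebraMap_end_surjective_of_tensor_self_equiv [Module.Finite R M] [Projective R M]
    (φ : M ⊗[R] M ≃ₗ[R] M) : Function.Surjective (algebraMap R (Module.End R M)) := by
  have hcomm := tensorProductComm_eq_refl_of_rankAtStalk_le_one
    (rankAtStalk_le_one_of_tensor_self_equiv φ)
  intro g
  obtain ⟨t, rfl⟩ := (dualTensorHomEquiv R M M).surjective g
  exact ⟨contractLeft R M t, by
    simp [dualTensorHomEquiv, dualTensorHom_eq_of_tensorProductComm_eq_refl hcomm]⟩

theorem ker_algebraLinearMap_end_eq_annihilator :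
    LinearMap.ker (Algebra.linearMap R (Module.End R M)) = Module.annihilator R M := by
  ext r
  simp [Module.mem_annihilator, LinearMap.ext_iff]

variable (R M) in
noncomputable def quotAnnihilatorTensorEquiv : (R ⧸ Module.annihilator R M) ⊗[R] M ≃ₗ[R] M :=
  quotTensorEquivQuotSMul M _ ≪≫ₗ Submodule.quotEquivOfEqBot _ (by
    rw [eq_bot_iff, Submodule.smul_le]
    intro r hr m _
    exact (Submodule.mem_bot R).mpr (Module.mem_annihilator.mp hr m))

theorem nonempty_linearEquiv_quot_annihilator_of_tensor_self [Module.Finite R M] [Projective R M]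
    (φ : M ⊗[R] M ≃ₗ[R] M) : Nonempty (M ≃ₗ[R] R ⧸ Module.annihilator R M) := by
  let ψ : (R ⧸ Module.annihilator R M) ≃ₗ[R] Module.End R M :=
    (Submodule.quotEquivOfEq _ _ ker_algebraLinearMap_end_eq_annihilator.symm).trans
      ((Algebra.linearMap R _).quotKerEquivOfSurjective
        (algebraMap_end_surjective_of_tensor_self_equiv φ))
  let χ : Module.End R M ⊗[R] M ≃ₗ[R] Module.End R M :=
    (rTensorHomEquivHomRTensor R M M M).trans φ.congrRight
  exact ⟨(quotAnnihilatorTensorEquiv R M).symm.trans ((ψ.rTensor M).trans (χ.trans ψ.symm))⟩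

theorem nonempty_tensor_self_linearEquiv_iff [Module.Finite R M] [Projective R M] :
    Nonempty (M ⊗[R] M ≃ₗ[R] M) ↔ Nonempty (M ≃ₗ[R] R ⧸ Module.annihilator R M) :=
  ⟨fun ⟨φ⟩ => nonempty_linearEquiv_quot_annihilator_of_tensor_self φ,
    fun ⟨g⟩ => ⟨(g.rTensor M).trans (quotAnnihilatorTensorEquiv R M)⟩⟩

end

section
variable {R : Type*} [CommRing R]

theorem Ideal.exists_isIdempotentElem_eq_span_one_sub (I : Ideal R) [Projective R (R ⧸ I)] :
    ∃ e : R, IsIdempotentElem e ∧ I = Ideal.span {1 - e} := by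
  obtain ⟨s, hs⟩ := Module.projective_lifting_property (Submodule.mkQ I) LinearMap.id
    (Submodule.mkQ_surjective I)
  have h1e : 1 - s 1 ∈ I := by
    rw [← Ideal.Quotient.eq_zero_iff_mem, map_sub, map_one]
    exact sub_eq_zero.mpr (LinearMap.congr_fun hs 1).symm
  have hker : ∀ r ∈ I, r * s 1 = 0 := fun r hr => by
    rw [← smul_eq_mul, ← map_smul, Algebra.smul_def, mul_one, Ideal.Quotient.algebraMap_eq,
      Ideal.Quotient.eq_zero_iff_mem.mpr hr, map_zero]
  refine ⟨s 1, ?_, le_antisymm (fun r hr => Ideal.mem_span_singleton'.mpr ⟨r, ?_⟩)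
    ((Ideal.span_singleton_le_iff_mem I).mpr h1e)⟩
  · have := hker _ h1e
    rwa [sub_mul, one_mul, sub_eq_zero, eq_comm] at this
  · rw [mul_sub, mul_one, hker r hr, sub_zero]

noncomputable def IsIdempotentElem.quotSpanOneSubEquiv {e : R} (he : IsIdempotentElem e) :
    (R ⧸ Ideal.span {1 - e}) ≃ₗ[R] Ideal.span {e} :=
  Submodule.quotEquivOfEq _ _ he.ker_toSpanSingleton_eq_span.symm ≪≫ₗ
    (LinearMap.toSpanSingleton R R e).quotKerEquivRange ≪≫ₗ
    LinearEquiv.ofEq _ _ (LinearMap.span_singleton_eq_range R R e).symm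

theorem nonempty_linearEquiv_quot_annihilator_iff {M : Type*} [AddCommGroup M] [Module R M]
    [Projective R M] :
    Nonempty (M ≃ₗ[R] R ⧸ Module.annihilator R M) ↔ ∃ e : R, IsIdempotentElem e ∧
      Nonempty (M ≃ₗ[R] Ideal.span {e}) ∧ Module.annihilator R M = Ideal.span {1 - e} := by
  refine ⟨fun ⟨g⟩ => ?_, fun ⟨e, he, ⟨g⟩, hann⟩ => ?_⟩
  · have := Projective.of_equiv g
    obtain ⟨e, he, hann⟩ := (Module.annihilator R M).exists_isIdempotentElem_eq_span_one_sub
    exact ⟨e, he, ⟨g.trans ((Submodule.quotEquivOfEq _ _ hann).trans he.quotSpanOneSubEquiv)⟩,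
      hann⟩
  · exact ⟨g.trans (he.quotSpanOneSubEquiv.symm.trans (Submodule.quotEquivOfEq _ _ hann.symm))⟩

end

/-- For a finitely generated projective module `M` over a commutative ring `R`,
with `I_M = Ann_R(M)`, the following are equivalent:
(i) `M ⊗_R M ≅ M`;  (ii) `M ≅ R/I_M`;
(iii) `M ≅ Re` for some idempotent `e` of `R`, and then `I_M = R(1-e)`. -/
theorem idempotent_picS_classes (R : Type) [CommRing R]
    (M : Type) [AddCommGroup M] [Module R M]
    (hfin : Module.Finite R M) (hproj : Module.Projective R M) :
    (Nonempty ((M ⊗[R] M) ≃ₗ[R] M) ↔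
      Nonempty (M ≃ₗ[R] (R ⧸ ((⊤ : Submodule R M).annihilator))))
    ∧ (Nonempty (M ≃ₗ[R] (R ⧸ ((⊤ : Submodule R M).annihilator))) ↔
      ∃ e : R, IsIdempotentElem e ∧
        Nonempty (M ≃ₗ[R] ↥(Ideal.span {e})) ∧
        (⊤ : Submodule R M).annihilator = Ideal.span {1 - e}) := by
  rw [Submodule.annihilator_top]
  exact ⟨nonempty_tensor_self_linearEquiv_iff, nonempty_linearEquiv_quot_annihilator_iff⟩
end

section
/- Let α = (D_g, α_g)_{g∈G} be a unital partial action of a group G on a commutative ring R, with D_g = R·1_g. Let E be a central R-R-bimodule with 1_{g⁻¹}x = x for all x ∈ E, and define E_g to be E with new R-action r • x = α_{g⁻¹}(r 1_g)·x. Then: if E is a finitely generated projective R-module, so is E_g; if E has rank ≤ 1 at every prime, so does E_g; and for central R-R-bimodules E, F both annihilated by 1−1_{g⁻¹}, there is an R-module isomorphism (E ⊗_R F)_g ≅ E_g ⊗_R F_g. -/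
open TensorProduct

/-- A unital partial action `α = (D_g, α_g)` of a group `G` on a commutative
ring `R`: each `D_g` is the ideal generated by the idempotent `e g` and `α g`
is a ring isomorphism `D_{g⁻¹} → D_g`, encoded as a map `R → R` depending only
on the `D_{g⁻¹}`-component. -/
structure PartialActionCRing (G : Type) [Group G] (R : Type) [CommRing R] where
  e : G → R
  α : G → R → R
  idem : ∀ g, IsIdempotentElem (e g)
  e_one : e 1 = 1
  α_one : ∀ r, α 1 r = r
  proj : ∀ g r, α g r = α g (r * e g⁻¹)
  map_add : ∀ g r s, α g (r + s) = α g r + α g s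
  map_mul' : ∀ g r s, α g (r * s * e g⁻¹) = α g r * α g s
  map_e : ∀ g, α g (e g⁻¹) = e g
  mem : ∀ g r, α g r * e g = α g r
  inv_comp : ∀ g r, α g⁻¹ (α g (r * e g⁻¹)) = r * e g⁻¹
  comp : ∀ g h r,
    α g (α h (r * e h⁻¹) * e g⁻¹) = α (g * h) (r * e (g * h)⁻¹) * e g
  rangeEq : ∀ g h, α g (e h * e g⁻¹) = e g * e (g * h)

variable {G R : Type} [Group G] [CommRing R]

/-- `B` is (isomorphic to) the twisted module `A_g`: the same abelian group as
`A`, with `R`-action `r • x = α_{g⁻¹}(r·1_g)·x`.  (Here `A` is assumed to be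
annihilated by `1 - 1_{g⁻¹}`.) -/
def IsTwistOf (pa : PartialActionCRing G R) (g : G) (A B : Type)
    [AddCommGroup A] [Module R A] [AddCommGroup B] [Module R B] : Prop :=
  ∃ φ : A ≃+ B, ∀ (r : R) (x : A), φ (pa.α g⁻¹ (r * pa.e g) • x) = r • φ x

/-- `M` has rank `≤ 1` at every prime of `R`. -/
def RankLeOne (R : Type) [CommRing R] (M : Type) [AddCommGroup M] [Module R M] : Prop :=
  ∀ (p : Ideal R) [p.IsPrime],
    Subsingleton (LocalizedModule p.primeCompl M) ∨
      Nonempty (LocalizedModule p.primeCompl M ≃ₗ[Localization p.primeCompl]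
        Localization p.primeCompl)

/-!
On the corner `R·1_{g⁻¹}`, where `E` lives, `α_g` is a ring isomorphism onto `R·1_g` with
inverse `α_{g⁻¹}`, so the twist `E ↦ E_g` is transport of structure along it. A splitting of
`E` off `Rⁿ` becomes a splitting of `E_g` off `Rⁿ` after applying `α_g`, `α_{g⁻¹}`
coordinatewise. At a prime `p ∌ 1_g`, `α_g` induces `R_q ≃ R_p` for `q = α_g⁻¹(p)` and carries
`E_q` onto `(E_g)_p`; at a prime `p ∋ 1_g` the unit `1 - 1_g` kills `E_g`. Finally,
`φ_E ⊗ φ_F` twists `E ⊗ F` into `E_g ⊗ F_g`, and twists are unique up to `R`-linear isomorphism.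
-/
namespace PartialActionCRing

variable (pa : PartialActionCRing G R) (g : G)

lemma α_zero : pa.α g 0 = 0 := by
  simpa using pa.map_add g 0 0

lemma α_mul (r s : R) : pa.α g (r * s) = pa.α g r * pa.α g s := by
  rw [pa.proj g (r * s), pa.map_mul']

lemma α_apply_one : pa.α g 1 = pa.e g := by
  rw [pa.proj, one_mul, pa.map_e]

lemma α_inv_mul_e (r : R) : pa.α g⁻¹ (r * pa.e g) = pa.α g⁻¹ r := by
  simpa using (pa.proj g⁻¹ r).symm

lemma α_inv_e : pa.α g⁻¹ (pa.e g) = pa.e g⁻¹ := by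
  simpa using pa.map_e g⁻¹

lemma α_α_inv (r : R) : pa.α g (pa.α g⁻¹ r) = r * pa.e g := by
  simpa [α_inv_mul_e] using pa.inv_comp g⁻¹ r

lemma α_inv_α (r : R) : pa.α g⁻¹ (pa.α g r) = r * pa.e g⁻¹ := by
  rw [pa.proj g r, pa.inv_comp]

lemma α_α_inv_mul (r s : R) : pa.α g (pa.α g⁻¹ r * s) = r * pa.α g s := by
  rw [α_mul, α_α_inv, mul_assoc, mul_comm (pa.e g), pa.mem]

def compRingHom {S : Type*} [Semiring S] (h : G) (f : R →+* S) (hf : f (pa.e h) = 1) :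
    R →+* S where
  toFun r := f (pa.α h r)
  map_one' := by rw [α_apply_one, hf]
  map_mul' r s := by rw [α_mul, map_mul]
  map_zero' := by rw [α_zero, map_zero]
  map_add' r s := by rw [pa.map_add, _root_.map_add]

end PartialActionCRing

lemma IsIdempotentElem.algebraMap_eq_one {S : Submonoid R} (A : Type*) [CommRing A] [Algebra R A]
    [IsLocalization S A] {x : R} (hx : IsIdempotentElem x) (hxS : x ∈ S) :
    algebraMap R A x = 1 :=
  (IsIdempotentElem.iff_eq_one_of_isUnit (IsLocalization.map_units A ⟨x, hxS⟩)).mp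
    (hx.map (algebraMap R A))

def IsTwistMap (pa : PartialActionCRing G R) (g : G) {A B : Type*}
    [AddCommGroup A] [Module R A] [AddCommGroup B] [Module R B] (φ : A ≃+ B) : Prop :=
  ∀ (r : R) (x : A), φ (pa.α g⁻¹ (r * pa.e g) • x) = r • φ x

def LinearMap.conjTwist {M N M' N' : Type*} [AddCommGroup M] [Module R M] [AddCommGroup N]
    [Module R N] [AddCommGroup M'] [Module R M'] [AddCommGroup N'] [Module R N']
    (τ : R → R) (f : M →ₗ[R] N) (a : M' →+ M) (b : N →+ N')
    (ha : ∀ (r : R) (x : M'), a (r • x) = τ r • a x)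
    (hb : ∀ (r : R) (y : N), b (τ r • y) = r • b y) : M' →ₗ[R] N' where
  toFun x := b (f (a x))
  map_add' x y := by simp only [map_add]
  map_smul' r x := by simp only [ha, map_smul, hb, RingHom.id_apply]

namespace IsTwistMap

variable {pa : PartialActionCRing G R} {g : G} {E B : Type*}
  [AddCommGroup E] [Module R E] [AddCommGroup B] [Module R B] {φ : E ≃+ B}

lemma map_α_inv_smul (hφ : IsTwistMap pa g φ) (r : R) (x : E) :
    φ (pa.α g⁻¹ r • x) = r • φ x := by
  rw [← pa.α_inv_mul_e]; exact hφ r x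

lemma symm_smul (hφ : IsTwistMap pa g φ) (r : R) (b : B) :
    φ.symm (r • b) = pa.α g⁻¹ r • φ.symm b :=
  φ.injective (by rw [φ.apply_symm_apply, hφ.map_α_inv_smul, φ.apply_symm_apply])

variable (hE : ∀ x : E, pa.e g⁻¹ • x = x)
include hE

lemma map_smul (hφ : IsTwistMap pa g φ) (r : R) (x : E) :
    φ (r • x) = pa.α g r • φ x := by
  rw [← hφ.map_α_inv_smul, pa.α_inv_α, mul_smul, hE]

lemma e_smul (hφ : IsTwistMap pa g φ) (b : B) : pa.e g • b = b := by
  rw [← φ.apply_symm_apply b, ← hφ.map_α_inv_smul, pa.α_inv_e, hE]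

theorem finite_and_projective (hφ : IsTwistMap pa g φ) [Module.Finite R E]
    [Module.Projective R E] : Module.Finite R B ∧ Module.Projective R B := by
  obtain ⟨n, π, s, -, -, hπs⟩ := Module.Finite.exists_comp_eq_id_of_projective R E
  let αFin (h : G) : (Fin n → R) →+ (Fin n → R) :=
    (AddMonoidHom.mk' (pa.α h) (pa.map_add h)).compLeft (Fin n)
  let s' : B →ₗ[R] Fin n → R := LinearMap.conjTwist (pa.α g⁻¹) s φ.symm (αFin g)
    hφ.symm_smul (fun r v ↦ funext fun i ↦ pa.α_α_inv_mul g r (v i))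
  let π' : (Fin n → R) →ₗ[R] B := LinearMap.conjTwist (pa.α g⁻¹) π (αFin g⁻¹) φ
    (fun r v ↦ funext fun i ↦ pa.α_mul g⁻¹ r (v i)) hφ.map_α_inv_smul
  have hαFin (v : Fin n → R) : αFin g⁻¹ (αFin g v) = pa.e g⁻¹ • v :=
    funext fun i ↦ (pa.α_inv_α g (v i)).trans (mul_comm _ _)
  have hπs' : π' ∘ₗ s' = .id := by
    ext b
    change φ (π (αFin g⁻¹ (αFin g (s (φ.symm b))))) = b
    rw [hαFin, _root_.map_smul, ← LinearMap.comp_apply π s, hπs, LinearMap.id_apply, hE,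
      φ.apply_symm_apply]
  exact ⟨.of_surjective π' (LinearMap.surjective_of_comp_eq_id _ _ hπs'), .of_split s' π' hπs'⟩

end IsTwistMap

theorem IsTwistOf.nonempty_linearEquiv {pa : PartialActionCRing G R} {g : G} {A B C : Type}
    [AddCommGroup A] [Module R A] [AddCommGroup B] [Module R B] [AddCommGroup C] [Module R C]
    (hB : IsTwistOf pa g A B) (hC : IsTwistOf pa g A C) : Nonempty (B ≃ₗ[R] C) := by
  obtain ⟨φ, hφ : IsTwistMap pa g φ⟩ := hB
  obtain ⟨ψ, hψ : IsTwistMap pa g ψ⟩ := hC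
  exact ⟨(φ.symm.trans ψ).toLinearEquiv fun r b ↦ by
    simp only [AddEquiv.trans_apply, hφ.symm_smul, hψ.map_α_inv_smul]⟩

namespace TensorProduct

variable {M N M' N' : Type*} [AddCommGroup M] [Module R M] [AddCommGroup N] [Module R N]
  [AddCommGroup M'] [Module R M'] [AddCommGroup N'] [Module R N']

def mapAddMonoidHom (σ : R → R) (a : M →+ M') (b : N →+ N')
    (ha : ∀ (r : R) (x : M), a (r • x) = σ r • a x)
    (hb : ∀ (r : R) (y : N), b (r • y) = σ r • b y) : M ⊗[R] N →+ M' ⊗[R] N' :=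
  liftAddHom
    { toFun x :=
        { toFun y := a x ⊗ₜ b y
          map_zero' := by simp
          map_add' y y' := by simp [tmul_add] }
      map_zero' := by ext; simp
      map_add' x x' := by ext; simp [add_tmul] }
    fun r x y ↦ by simp [ha, hb, smul_tmul]

def congrAddEquiv (σ τ : R → R) (a : M ≃+ M') (b : N ≃+ N')
    (ha : ∀ (r : R) (x : M), a (r • x) = σ r • a x)
    (hb : ∀ (r : R) (y : N), b (r • y) = σ r • b y)
    (ha' : ∀ (r : R) (x : M'), a.symm (r • x) = τ r • a.symm x)
    (hb' : ∀ (r : R) (y : N'), b.symm (r • y) = τ r • b.symm y) : M ⊗[R] N ≃+ M' ⊗[R] N' :=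
  (mapAddMonoidHom σ a b ha hb).toAddEquiv (mapAddMonoidHom τ a.symm b.symm ha' hb')
    (AddMonoidHom.ext fun z ↦ z.induction_on (by simp)
      (fun x y ↦ show a.symm (a x) ⊗ₜ b.symm (b y) = x ⊗ₜ y by simp)
      fun z w hz hw ↦ by simp_all)
    (AddMonoidHom.ext fun z ↦ z.induction_on (by simp)
      (fun x y ↦ show a (a.symm x) ⊗ₜ b (b.symm y) = x ⊗ₜ y by simp)
      fun z w hz hw ↦ by simp_all)

end TensorProduct

theorem IsTwistOf.tensor {pa : PartialActionCRing G R} {g : G} {E F BE BF : Type}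
    [AddCommGroup E] [Module R E] [AddCommGroup F] [Module R F]
    [AddCommGroup BE] [Module R BE] [AddCommGroup BF] [Module R BF]
    (hE : ∀ x : E, pa.e g⁻¹ • x = x) (hF : ∀ x : F, pa.e g⁻¹ • x = x)
    (hBE : IsTwistOf pa g E BE) (hBF : IsTwistOf pa g F BF) :
    IsTwistOf pa g (E ⊗[R] F) (BE ⊗[R] BF) := by
  obtain ⟨φE, hφE : IsTwistMap pa g φE⟩ := hBE
  obtain ⟨φF, hφF : IsTwistMap pa g φF⟩ := hBF
  refine ⟨TensorProduct.congrAddEquiv (pa.α g) (pa.α g⁻¹) φE φF (hφE.map_smul hE)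
    (hφF.map_smul hF) hφE.symm_smul hφF.symm_smul, fun r z ↦ ?_⟩
  induction z using TensorProduct.induction_on with
  | zero => simp
  | tmul x y =>
    change φE _ ⊗ₜ φF y = r • (φE x ⊗ₜ φF y)
    rw [hφE r x, TensorProduct.smul_tmul']
  | add z w hz hw => simp_all

namespace PartialActionCRing

variable (pa : PartialActionCRing G R) (g : G) (p : Ideal R) [p.IsPrime] (hp : pa.e g ∉ p)
include hp

lemma algebraMap_e_eq_one : algebraMap R (Localization.AtPrime p) (pa.e g) = 1 :=
  (pa.idem g).algebraMap_eq_one (S := p.primeCompl) _ hp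

/-- The prime `{r | α_g r ∈ p}`, as the preimage of the maximal ideal of `R_p`. -/
def comapPrime : Ideal R :=
  (IsLocalRing.maximalIdeal (Localization.AtPrime p)).comap
    (pa.compRingHom g (algebraMap R _) (pa.algebraMap_e_eq_one g p hp))

instance : (pa.comapPrime g p hp).IsPrime := Ideal.comap_isPrime _ _

lemma mem_primeCompl_comapPrime {r : R} :
    r ∈ (pa.comapPrime g p hp).primeCompl ↔ pa.α g r ∈ p.primeCompl :=
  IsLocalRing.notMem_maximalIdeal.trans (IsLocalization.AtPrime.isUnit_to_map_iff _ p _)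

lemma algebraMap_e_inv_eq_one :
    algebraMap R (Localization.AtPrime (pa.comapPrime g p hp)) (pa.e g⁻¹) = 1 :=
  (pa.idem g⁻¹).algebraMap_eq_one (S := (pa.comapPrime g p hp).primeCompl) _ <| by
    rw [mem_primeCompl_comapPrime, pa.map_e]
    exact hp

noncomputable def localizationEquiv :
    Localization.AtPrime (pa.comapPrime g p hp) ≃+* Localization.AtPrime p :=
  RingEquiv.ofRingHom
    (IsLocalization.lift (M := (pa.comapPrime g p hp).primeCompl)
      (g := pa.compRingHom g (algebraMap R _) (pa.algebraMap_e_eq_one g p hp))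
      fun s ↦ (IsLocalization.AtPrime.isUnit_to_map_iff _ p _).mpr
        ((pa.mem_primeCompl_comapPrime g p hp).mp s.2))
    (IsLocalization.lift (M := p.primeCompl)
      (g := pa.compRingHom g⁻¹ (algebraMap R _) (pa.algebraMap_e_inv_eq_one g p hp))
      fun s ↦ (IsLocalization.AtPrime.isUnit_to_map_iff _ (pa.comapPrime g p hp) _).mpr <| by
        rw [mem_primeCompl_comapPrime, α_α_inv]
        exact p.primeCompl.mul_mem s.2 hp)
    (IsLocalization.ringHom_ext p.primeCompl <| RingHom.ext fun r ↦ by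
      simp [IsLocalization.lift_eq, compRingHom, α_α_inv, pa.algebraMap_e_eq_one g p hp])
    (IsLocalization.ringHom_ext (pa.comapPrime g p hp).primeCompl <| RingHom.ext fun r ↦ by
      simp [IsLocalization.lift_eq, compRingHom, α_inv_α, pa.algebraMap_e_inv_eq_one g p hp])

lemma localizationEquiv_algebraMap (r : R) :
    pa.localizationEquiv g p hp (algebraMap R _ r) = algebraMap R _ (pa.α g r) :=
  IsLocalization.lift_eq (M := (pa.comapPrime g p hp).primeCompl)
    (g := pa.compRingHom g (algebraMap R _) (pa.algebraMap_e_eq_one g p hp)) _ r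

end PartialActionCRing

namespace IsTwistMap

variable {pa : PartialActionCRing G R} {g : G} {E B : Type*}
  [AddCommGroup E] [Module R E] [AddCommGroup B] [Module R B] {φ : E ≃+ B}
  (hE : ∀ x : E, pa.e g⁻¹ • x = x) (hφ : IsTwistMap pa g φ) (p : Ideal R) [p.IsPrime]
include hE hφ

lemma subsingleton_localizedModule_of_e_mem (hp : pa.e g ∈ p) :
    Subsingleton (LocalizedModule p.primeCompl B) := by
  rw [LocalizedModule.subsingleton_iff]
  refine fun b ↦ ⟨1 - pa.e g, fun h ↦ ?_, by rw [sub_smul, one_smul, hφ.e_smul hE, sub_self]⟩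
  exact p.one_notMem (by simpa using p.add_mem h hp)

lemma α_smul_eq_of_smul_symm_eq {c : R} {b b' : B} (h : c • φ.symm b = c • φ.symm b') :
    pa.α g c • b = pa.α g c • b' := by
  simpa only [hφ.map_smul hE, φ.apply_symm_apply] using congrArg φ h

variable (hp : pa.e g ∉ p)

lemma subsingleton_localizedModule
    [Subsingleton (LocalizedModule (pa.comapPrime g p hp).primeCompl E)] :
    Subsingleton (LocalizedModule p.primeCompl B) := by
  rw [LocalizedModule.subsingleton_iff] at *
  intro b
  obtain ⟨c, hc, hcb⟩ := ‹∀ x : E, _› (φ.symm b)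
  refine ⟨pa.α g c, (pa.mem_primeCompl_comapPrime g p hp).mp hc, ?_⟩
  simpa using hφ.α_smul_eq_of_smul_symm_eq hE (b' := 0) (by simpa using hcb)

lemma nonempty_linearEquiv_localization
    (ε : LocalizedModule (pa.comapPrime g p hp).primeCompl E ≃ₗ[Localization.AtPrime
      (pa.comapPrime g p hp)] Localization.AtPrime (pa.comapPrime g p hp)) :
    Nonempty (LocalizedModule p.primeCompl B ≃ₗ[Localization.AtPrime p]
      Localization.AtPrime p) := by
  set q := pa.comapPrime g p hp
  set Φ := pa.localizationEquiv g p hp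
  -- `b ↦ Φ (ε (φ⁻¹ b / 1))` exhibits `R_p` as the localization of `B` at `p`.
  let ℓ : B →ₗ[R] Localization.AtPrime p := LinearMap.conjTwist (pa.α g⁻¹)
    ((ε.restrictScalars R).toLinearMap ∘ₗ LocalizedModule.mkLinearMap q.primeCompl E)
    φ.symm Φ.toAddMonoidHom hφ.symm_smul fun r y ↦ by
      simp [Algebra.smul_def, Φ, PartialActionCRing.localizationEquiv_algebraMap,
        pa.α_α_inv, pa.algebraMap_e_eq_one g p hp]
  have : IsLocalizedModule p.primeCompl ℓ := by
    refine ⟨IsLocalizedModule.map_units (Algebra.linearMap R (Localization.AtPrime p)),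
      fun y ↦ ?_, fun {b b'} h ↦ ?_⟩
    · obtain ⟨⟨x, t⟩, ht⟩ := IsLocalizedModule.surj q.primeCompl
        (LocalizedModule.mkLinearMap q.primeCompl E) (ε.symm (Φ.symm y))
      refine ⟨⟨φ x, ⟨pa.α g t, (pa.mem_primeCompl_comapPrime g p hp).mp t.2⟩⟩, ?_⟩
      change _ = Φ (ε (LocalizedModule.mkLinearMap q.primeCompl E (φ.symm (φ x))))
      rw [φ.symm_apply_apply, ← ht]
      change pa.α g t • y = Φ (ε ((t : R) • ε.symm (Φ.symm y)))
      rw [← algebraMap_smul (Localization.AtPrime q) (t : R), LinearEquiv.map_smul,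
        ε.apply_symm_apply, smul_eq_mul, map_mul, Φ.apply_symm_apply,
        pa.localizationEquiv_algebraMap, Algebra.smul_def]
    · have hmk : LocalizedModule.mkLinearMap q.primeCompl E (φ.symm b) =
          LocalizedModule.mkLinearMap q.primeCompl E (φ.symm b') :=
        ε.injective (Φ.injective h)
      obtain ⟨c, hc⟩ := IsLocalizedModule.exists_of_eq (S := q.primeCompl) hmk
      exact ⟨⟨pa.α g c, (pa.mem_primeCompl_comapPrime g p hp).mp c.2⟩,
        hφ.α_smul_eq_of_smul_symm_eq hE hc⟩
  exact ⟨(IsLocalizedModule.iso p.primeCompl ℓ).extendScalarsOfIsLocalization p.primeCompl _⟩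

end IsTwistMap

theorem IsTwistMap.rankLeOne {pa : PartialActionCRing G R} {g : G} {E B : Type}
    [AddCommGroup E] [Module R E] [AddCommGroup B] [Module R B] {φ : E ≃+ B}
    (hE : ∀ x : E, pa.e g⁻¹ • x = x) (hφ : IsTwistMap pa g φ) (h : RankLeOne R E) :
    RankLeOne R B := by
  intro p _
  by_cases hp : pa.e g ∈ p
  · exact .inl (hφ.subsingleton_localizedModule_of_e_mem hE p hp)
  · rcases h (pa.comapPrime g p hp) with _ | ⟨⟨ε⟩⟩
    · exact .inl (hφ.subsingleton_localizedModule hE p hp)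
    · exact .inr (hφ.nonempty_linearEquiv_localization hE p hp ε)

/-- Properties of the twist `E ↦ E_g` (`E` a central `R`-`R`-bimodule with
`1_{g⁻¹}x = x` for all `x`, and `E_g` the same group with action
`r • x = α_{g⁻¹}(r 1_g) x`): it preserves finitely generated projective
modules, preserves rank `≤ 1`, and `(E ⊗_R F)_g ≅ E_g ⊗_R F_g`. -/
theorem twist_properties (pa : PartialActionCRing G R) (g : G) :
    (∀ (E B : Type) [AddCommGroup E] [Module R E] [AddCommGroup B] [Module R B],
      (∀ x : E, pa.e g⁻¹ • x = x) → IsTwistOf pa g E B →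
        ((Module.Finite R E → Module.Projective R E →
            Module.Finite R B ∧ Module.Projective R B)
          ∧ (RankLeOne R E → RankLeOne R B)))
    ∧ (∀ (E F BE BF C : Type)
        [AddCommGroup E] [Module R E] [AddCommGroup F] [Module R F]
        [AddCommGroup BE] [Module R BE] [AddCommGroup BF] [Module R BF]
        [AddCommGroup C] [Module R C],
        (∀ x : E, pa.e g⁻¹ • x = x) → (∀ x : F, pa.e g⁻¹ • x = x) →
        IsTwistOf pa g E BE → IsTwistOf pa g F BF →
        IsTwistOf pa g (E ⊗[R] F) C →
        Nonempty (C ≃ₗ[R] (BE ⊗[R] BF))) := by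
  refine ⟨fun E B _ _ _ _ hE ⟨φ, hφ⟩ ↦ ⟨fun _ _ ↦ IsTwistMap.finite_and_projective hE hφ,
    IsTwistMap.rankLeOne hE hφ⟩, ?_⟩
  intro E F BE BF C _ _ _ _ _ _ _ _ _ _ hE hF hBE hBF hC
  exact hC.nonempty_linearEquiv (hBE.tensor hE hF hBF)
end
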